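/- arXiv:1207.6127 — 2 statements merged into one kernel-verified Lean document; each statement's English description precedes it below -/
import Mathlib

section
/- Let B_n = (k_1+1, k_2+1, …, k_n+1) be a bouquet of n ≥ 2 circles with a cut-vertex, where k_n ≥ k_{n−1} ≥ … ≥ k_1 ≥ 2. Then the zero forcing number of its line graph satisfies Z(L(B_n)) = 2n − 1. -/
/-!
Index the edges of the bouquet by pairs `(i, j)`, the `j`-th edge along the `i`-th circle. In
these coordinates the line graph consists of `n` cycles of lengths `k i + 1`, whose `2n` edges at
the cut vertex form in addition a clique. The edges of one circle form a fort, and so do the edges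
of two circles with one edge removed from each. Hence a zero forcing set meets every circle, and
at most one of them in a single edge, so it has at least `2n - 1` elements. Conversely, the first
edge of every circle together with the second edge of all circles but one is a zero forcing set.
-/

open SimpleGraph

variable {V : Type*}

/-- `W` is a resolving set of `G`: every pair of distinct vertices is resolved
by some vertex of `W` via graph distance. -/
def IsResolvingSet (G : SimpleGraph V) (W : Set V) : Prop :=
  ∀ u v : V, u ≠ v → ∃ w ∈ W, G.dist u w ≠ G.dist v w

/-- The metric dimension of `G`: minimum cardinality of a resolving set. -/
noncomputable def metricDim (G : SimpleGraph V) : ℕ :=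
  sInf {k | ∃ W : Set V, W.ncard = k ∧ IsResolvingSet G W}

/-- One global application of the zero-forcing color-change rule:
a black vertex `u` forces its unique white neighbor to become black. -/
def zfStep (G : SimpleGraph V) (S : Set V) : Set V :=
  S ∪ {v | ∃ u ∈ S, G.Adj u v ∧ ∀ w, G.Adj u w → w ∉ S → w = v}

/-- `S` is a zero forcing set of `G` if iterating the color-change rule
starting from `S` eventually turns all vertices black. -/
def IsZeroForcingSet (G : SimpleGraph V) (S : Set V) : Prop :=
  ∃ m : ℕ, (zfStep G)^[m] S = Set.univ

/-- The zero forcing number of `G`: minimum cardinality of a zero forcing set. -/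
noncomputable def zeroForcingNum (G : SimpleGraph V) : ℕ :=
  sInf {k | ∃ S : Set V, S.ncard = k ∧ IsZeroForcingSet G S}

/-- The wheel graph `W_{1,n} = C_n + K_1`: hub `none` joined to the cycle `C_n`
on vertices `some i`, `i : Fin n`. -/
def wheelGraph (n : ℕ) : SimpleGraph (Option (Fin n)) :=
  SimpleGraph.fromRel (fun u v =>
    match u, v with
    | none, some _ => True
    | some i, some j => ((i : ℕ) : ZMod n) + 1 = ((j : ℕ) : ZMod n)
    | _, _ => False)

/-- The bouquet of `n` circles of lengths `k 0 + 1, …, k (n-1) + 1`: the cut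
vertex is `none`; the `i`-th circle consists of `none` together with the vertices
`some ⟨i, j⟩`, `j : Fin (k i)`, in cyclic order. -/
def bouquet (n : ℕ) (k : Fin n → ℕ) : SimpleGraph (Option (Σ i : Fin n, Fin (k i))) :=
  SimpleGraph.fromRel (fun u v =>
    match u, v with
    | none, some a => (a.2 : ℕ) = 0 ∨ (a.2 : ℕ) = k a.1 - 1
    | some a, some b => a.1 = b.1 ∧ ((b.2 : ℕ) = (a.2 : ℕ) + 1)
    | _, _ => False)

/-- The path cover number of `G`: the minimum number of vertex-disjoint induced
paths covering all the vertices of `G`. -/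
noncomputable def pathCoverNum (G : SimpleGraph V) : ℕ :=
  sInf {m | ∃ f : V → Fin m, ∀ i : Fin m,
    ∃ k, 1 ≤ k ∧ Nonempty ((G.induce (f ⁻¹' {i})) ≃g SimpleGraph.pathGraph k)}

/-- `G` contains a Hamiltonian path. -/
def HasHamiltonianPath [DecidableEq V] (G : SimpleGraph V) : Prop :=
  ∃ (u v : V) (p : G.Walk u v), p.IsHamiltonian

section ZeroForcing

open Function

variable {W : Type*} {G : SimpleGraph V} {H : SimpleGraph W} {S T : Set V}

lemma subset_zfStep (S : Set V) : S ⊆ zfStep G S := Set.subset_union_left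

lemma monotone_iterate_zfStep (S : Set V) : Monotone fun m => (zfStep G)^[m] S :=
  fun _ _ h => monotone_iterate_of_id_le subset_zfStep h S

lemma zfStep_preimage (e : G ≃g H) (T : Set W) : zfStep G (e ⁻¹' T) = e ⁻¹' zfStep H T := by
  ext v
  simp only [zfStep, Set.mem_union, Set.mem_preimage, Set.mem_ofPred_eq]
  refine or_congr_right ⟨?_, ?_⟩
  · rintro ⟨u, hu, huv, huniq⟩
    refine ⟨e u, hu, e.map_adj_iff.mpr huv, fun w hw hwT => ?_⟩
    obtain ⟨w, rfl⟩ := e.surjective w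
    rw [huniq w (e.map_adj_iff.mp hw) hwT]
  · rintro ⟨u, hu, huv, huniq⟩
    obtain ⟨u, rfl⟩ := e.surjective u
    exact ⟨u, hu, e.map_adj_iff.mp huv,
      fun w hw hwT => e.injective (huniq _ (e.map_adj_iff.mpr hw) hwT)⟩

lemma isZeroForcingSet_preimage_iff (e : G ≃g H) {T : Set W} :
    IsZeroForcingSet G (e ⁻¹' T) ↔ IsZeroForcingSet H T := by
  have hiter : ∀ m, (zfStep G)^[m] (e ⁻¹' T) = e ⁻¹' (zfStep H)^[m] T := fun m =>
    (Semiconj.iterate_right (f := (e ⁻¹' ·))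
      (fun T => (zfStep_preimage e T).symm) m T).symm
  simp only [IsZeroForcingSet, hiter, Set.preimage_eq_univ_iff, e.surjective.range_eq,
    Set.univ_subset_iff]

lemma ncard_preimage_iso (e : G ≃g H) (T : Set W) : (e ⁻¹' T).ncard = T.ncard :=
  Set.ncard_preimage_of_injective_subset_range e.injective (by simp [e.surjective.range_eq])

lemma zeroForcingNum_congr (e : G ≃g H) : zeroForcingNum G = zeroForcingNum H := by
  unfold zeroForcingNum
  congr 1
  ext m
  constructor
  · rintro ⟨S, rfl, hS⟩
    exact ⟨e.symm ⁻¹' S, ncard_preimage_iso e.symm S, (isZeroForcingSet_preimage_iff e.symm).mpr hS⟩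
  · rintro ⟨T, rfl, hT⟩
    exact ⟨e ⁻¹' T, ncard_preimage_iso e T, (isZeroForcingSet_preimage_iff e).mpr hT⟩

lemma zeroForcingNum_eq_of_forall_le {m : ℕ} (hS : IsZeroForcingSet G S) (hcard : S.ncard = m)
    (hmin : ∀ T, IsZeroForcingSet G T → m ≤ T.ncard) : zeroForcingNum G = m :=
  le_antisymm (Nat.sInf_le ⟨S, hcard, hS⟩)
    (le_csInf ⟨m, S, hcard, hS⟩ fun _ ⟨T, hT, hTz⟩ => hT ▸ hmin T hTz)

/-- A fort in the sense of Fast and Hicks: it can never receive its first black vertex. -/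
def IsFort (G : SimpleGraph V) (T : Set V) : Prop :=
  ∀ v ∈ T, ∀ u ∉ T, G.Adj u v → ∃ w ∈ T, w ≠ v ∧ G.Adj u w

lemma IsFort.disjoint_iterate_zfStep (hT : IsFort G T) (hS : Disjoint S T) (m : ℕ) :
    Disjoint ((zfStep G)^[m] S) T := by
  induction m with
  | zero => exact hS
  | succ m ih =>
    rw [iterate_succ_apply', zfStep, Set.disjoint_union_left]
    refine ⟨ih, Set.disjoint_left.mpr ?_⟩
    rintro v ⟨u, hu, huv, huniq⟩ hvT
    obtain ⟨w, hwT, hwv, huw⟩ := hT v hvT u (Set.disjoint_left.mp ih hu) huv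
    exact hwv (huniq w huw (Set.disjoint_right.mp ih hwT))

lemma IsZeroForcingSet.inter_nonempty_of_isFort (hS : IsZeroForcingSet G S) (hT : IsFort G T)
    (hne : T.Nonempty) : (S ∩ T).Nonempty := by
  rw [← Set.not_disjoint_iff_nonempty_inter]
  intro hdisj
  obtain ⟨m, hm⟩ := hS
  have := hT.disjoint_iterate_zfStep hdisj m
  rw [hm, Set.univ_disjoint] at this
  exact hne.ne_empty this

lemma two_mul_card_le_sum_add_one {ι : Type*} [Fintype ι] (c : ι → ℕ) (hpos : ∀ i, 1 ≤ c i)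
    (hone : ∀ i j, c i ≤ 1 → c j ≤ 1 → i = j) : 2 * Fintype.card ι ≤ ∑ i, c i + 1 := by
  classical
  have hsmall : (Finset.univ.filter fun i => c i ≤ 1).card ≤ 1 :=
    Finset.card_le_one.mpr fun i hi j hj =>
      hone i j (Finset.mem_filter.mp hi).2 (Finset.mem_filter.mp hj).2
  calc 2 * Fintype.card ι = ∑ _ : ι, 2 := by simp [mul_comm]
    _ ≤ ∑ i, (c i + if c i ≤ 1 then 1 else 0) :=
      Finset.sum_le_sum fun i _ => by have := hpos i; split_ifs <;> omega
    _ = ∑ i, c i + (Finset.univ.filter fun i => c i ≤ 1).card := by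
      rw [Finset.sum_add_distrib, Finset.sum_boole, Nat.cast_id]
    _ ≤ ∑ i, c i + 1 := by omega

/-- Every zero forcing set meets each fort `P i`, and at most one of them in a single vertex:
two such vertices `x ∈ P i`, `y ∈ P j` would leave the fort `(P i ∪ P j) \ {x, y}` white. -/
lemma IsZeroForcingSet.two_mul_card_le_ncard_add_one [Finite V] {ι : Type*} [Fintype ι]
    {P : ι → Set V} (hdisj : Pairwise (Disjoint on P)) (hnt : ∀ i, (P i).Nontrivial)
    (hfort : ∀ i, IsFort G (P i))
    (hfort₂ : ∀ i j, i ≠ j → ∀ x ∈ P i, ∀ y ∈ P j, IsFort G ((P i ∪ P j) \ {x, y}))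
    (hS : IsZeroForcingSet G S) : 2 * Fintype.card ι ≤ S.ncard + 1 := by
  have hpos : ∀ i, 1 ≤ (S ∩ P i).ncard := fun i =>
    (Set.ncard_pos (Set.toFinite _)).mpr (hS.inter_nonempty_of_isFort (hfort i) (hnt i).nonempty)
  have hone : ∀ i j, (S ∩ P i).ncard ≤ 1 → (S ∩ P j).ncard ≤ 1 → i = j := by
    intro i j hi hj
    by_contra hij
    obtain ⟨x, hx⟩ := Set.ncard_eq_one.mp (le_antisymm hi (hpos i))
    obtain ⟨y, hy⟩ := Set.ncard_eq_one.mp (le_antisymm hj (hpos j))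
    have hxP : x ∈ P i := (hx.symm ▸ Set.mem_singleton x : x ∈ S ∩ P i).2
    have hyP : y ∈ P j := (hy.symm ▸ Set.mem_singleton y : y ∈ S ∩ P j).2
    obtain ⟨z, hzP, hzx⟩ := (hnt i).exists_ne x
    have hzy : z ≠ y := fun h => Set.disjoint_left.mp (hdisj hij) hzP (h ▸ hyP)
    obtain ⟨e, heS, heU, hexy⟩ := hS.inter_nonempty_of_isFort (hfort₂ i j hij x hxP y hyP)
      ⟨z, Or.inl hzP, by simp [hzx, hzy]⟩
    rcases heU with he | he
    · exact hexy (Or.inl (Set.mem_singleton_iff.mp (hx ▸ ⟨heS, he⟩)))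
    · exact hexy (Or.inr (Set.mem_singleton_iff.mp (hy ▸ ⟨heS, he⟩)))
  have hsum : ∑ i, (S ∩ P i).ncard ≤ S.ncard := by
    rw [← finsum_eq_sum_of_fintype, ← Set.ncard_iUnion_of_finite (fun _ => Set.toFinite _)
      fun i j hij => (hdisj hij).mono Set.inter_subset_right Set.inter_subset_right]
    exact Set.ncard_le_ncard (Set.iUnion_subset fun _ => Set.inter_subset_left)
  have := two_mul_card_le_sum_add_one _ hpos hone
  omega

def zfClosure (G : SimpleGraph V) (S : Set V) : Set V := ⋃ m, (zfStep G)^[m] S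

lemma subset_zfClosure : S ⊆ zfClosure G S :=
  Set.subset_iUnion (fun m => (zfStep G)^[m] S) 0

lemma exists_subset_iterate_of_subset_zfClosure [Finite V] {X : Set V}
    (hX : X ⊆ zfClosure G S) : ∃ m, X ⊆ (zfStep G)^[m] S := by
  obtain ⟨m, hm⟩ := (monotone_iterate_zfStep S).directed_le
    |>.exists_mem_subset_of_finset_subset_biUnion (s := (Set.toFinite X).toFinset)
      (by simpa [zfClosure] using hX)
  exact ⟨m, by simpa using hm⟩

lemma mem_zfClosure_of_forces [Finite V] {u v : V} (hu : u ∈ zfClosure G S) (huv : G.Adj u v)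
    (hrest : ∀ w, G.Adj u w → w ≠ v → w ∈ zfClosure G S) : v ∈ zfClosure G S := by
  obtain ⟨m, hm⟩ := exists_subset_iterate_of_subset_zfClosure
    (X := insert u {w | G.Adj u w ∧ w ≠ v}) (Set.insert_subset hu fun w hw => hrest w hw.1 hw.2)
  refine Set.mem_iUnion.mpr ⟨m + 1, ?_⟩
  rw [iterate_succ_apply']
  exact Or.inr ⟨u, hm (Set.mem_insert u _), huv,
    fun w huw hw => by_contra fun hwv => hw (hm (Or.inr ⟨huw, hwv⟩))⟩

lemma isZeroForcingSet_of_zfClosure_eq_univ [Finite V] (h : zfClosure G S = Set.univ) :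
    IsZeroForcingSet G S := by
  obtain ⟨m, hm⟩ := exists_subset_iterate_of_subset_zfClosure h.ge
  exact ⟨m, Set.univ_subset_iff.mp hm⟩

end ZeroForcing

/-- `⟨i, j, _⟩` is the `j`-th edge along the `i`-th circle of `bouquet n k`, `j = 0, …, k i`;
the hub edges `0` and `k i` are the two at the cut vertex. -/
@[ext]
structure BouquetEdge (n : ℕ) (k : Fin n → ℕ) where
  circle : Fin n
  pos : ℕ
  pos_le : pos ≤ k circle

namespace BouquetEdge

variable {n : ℕ} {k : Fin n → ℕ}

instance : Finite (BouquetEdge n k) :=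
  Finite.of_injective (fun a => (a.circle, (⟨a.pos, Nat.lt_succ_of_le
      (a.pos_le.trans (Finset.le_sup (Finset.mem_univ a.circle)))⟩ : Fin (Finset.univ.sup k + 1))))
    fun a b h => by
      simp only [Prod.mk.injEq, Fin.mk.injEq] at h
      exact BouquetEdge.ext h.1 h.2

def IsHub (a : BouquetEdge n k) : Prop := a.pos = 0 ∨ a.pos = k a.circle

end BouquetEdge

open BouquetEdge

def bouquetLineGraph (n : ℕ) (k : Fin n → ℕ) : SimpleGraph (BouquetEdge n k) where
  Adj a b := a ≠ b ∧
    ((a.circle = b.circle ∧ (a.pos + 1 = b.pos ∨ b.pos + 1 = a.pos)) ∨ (a.IsHub ∧ b.IsHub))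
  symm := ⟨fun _ _ h => ⟨h.1.symm, h.2.imp (fun h' => ⟨h'.1.symm, h'.2.symm⟩) And.symm⟩⟩
  loopless := ⟨fun _ h => h.1 rfl⟩

section Bouquet

variable {n : ℕ} {k : Fin n → ℕ}

def circleVertex (k : Fin n → ℕ) (i : Fin n) (j : ℕ) : Option (Σ i : Fin n, Fin (k i)) :=
  if h : 0 < j ∧ j ≤ k i then some ⟨i, ⟨j - 1, by omega⟩⟩ else none

lemma circleVertex_eq_none {i : Fin n} {j : ℕ} :
    circleVertex k i j = none ↔ j = 0 ∨ k i < j := by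
  unfold circleVertex
  split_ifs with h <;> simp <;> omega

lemma circleVertex_eq_some {i : Fin n} {j : ℕ} {x : Σ i : Fin n, Fin (k i)} :
    circleVertex k i j = some x ↔ x.1 = i ∧ (x.2 : ℕ) + 1 = j := by
  obtain ⟨i', j', hj'⟩ := x
  unfold circleVertex
  split_ifs with h
  · simp only [Option.some.injEq, Sigma.mk.inj_iff]
    constructor
    · rintro ⟨rfl, h2⟩
      simp only [heq_iff_eq, Fin.mk.injEq] at h2
      exact ⟨rfl, by omega⟩
    · rintro ⟨rfl, rfl⟩
      simp
  · simp only [false_iff, not_and]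
    rintro rfl rfl
    omega

def BouquetEdge.toSym2 (a : BouquetEdge n k) : Sym2 (Option (Σ i : Fin n, Fin (k i))) :=
  s(circleVertex k a.circle a.pos, circleVertex k a.circle (a.pos + 1))

lemma none_mem_toSym2 {a : BouquetEdge n k} : none ∈ a.toSym2 ↔ a.IsHub := by
  have := a.pos_le
  simp only [toSym2, Sym2.mem_iff, eq_comm (a := none), circleVertex_eq_none, IsHub]
  omega

lemma some_mem_toSym2 {a : BouquetEdge n k} {x : Σ i : Fin n, Fin (k i)} :
    some x ∈ a.toSym2 ↔ x.1 = a.circle ∧ (a.pos = x.2 + 1 ∨ a.pos = x.2) := by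
  simp only [toSym2, Sym2.mem_iff, eq_comm (a := some x), circleVertex_eq_some]
  omega

lemma toSym2_mem_edgeSet {a : BouquetEdge n k} (hk : 0 < k a.circle) :
    a.toSym2 ∈ (bouquet n k).edgeSet := by
  have := a.pos_le
  simp only [toSym2, SimpleGraph.mem_edgeSet, bouquet, SimpleGraph.fromRel_adj, circleVertex]
  split_ifs <;> simp <;> omega

lemma exists_toSym2_eq {e : Sym2 (Option (Σ i : Fin n, Fin (k i)))}
    (he : e ∈ (bouquet n k).edgeSet) : ∃ a : BouquetEdge n k, a.toSym2 = e := by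
  induction e using Sym2.ind with
  | _ u v =>
  rw [SimpleGraph.mem_edgeSet] at he
  suffices ∃ a : BouquetEdge n k, u ∈ a.toSym2 ∧ v ∈ a.toSym2 from
    this.imp fun a ha => (Sym2.mem_and_mem_iff he.ne).mp ha
  have hub : ∀ x : Σ i, Fin (k i), (x.2 : ℕ) = 0 ∨ (x.2 : ℕ) = k x.1 - 1 →
      ∃ a : BouquetEdge n k, none ∈ a.toSym2 ∧ some x ∈ a.toSym2 := by
    rintro ⟨i, j, hj⟩ h
    simp only at h
    rcases h with rfl | h
    · exact ⟨⟨i, 0, Nat.zero_le _⟩, by simp [none_mem_toSym2, some_mem_toSym2, IsHub]⟩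
    · exact ⟨⟨i, k i, le_rfl⟩, by simp [none_mem_toSym2, some_mem_toSym2, IsHub]; omega⟩
  rw [bouquet, SimpleGraph.fromRel_adj] at he
  rcases u with _ | ⟨i, j⟩ <;> rcases v with _ | ⟨i', j'⟩ <;> simp at he
  · exact hub _ he
  · exact (hub _ he).imp fun _ => And.symm
  · rcases he.2 with ⟨rfl, h⟩ | ⟨rfl, h⟩
    · exact ⟨⟨i, j + 1, j.isLt⟩, by simp [some_mem_toSym2, h]⟩
    · exact ⟨⟨i', j' + 1, j'.isLt⟩, by simp [some_mem_toSym2, h]⟩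

lemma toSym2_injective (hk : ∀ i, 2 ≤ k i) :
    Function.Injective (toSym2 : BouquetEdge n k → _) := by
  intro a b h
  have hhub : a.IsHub ↔ b.IsHub := by rw [← none_mem_toSym2, h, none_mem_toSym2]
  have hsome : ∀ x : Σ i, Fin (k i), x.1 = a.circle → (a.pos = x.2 + 1 ∨ a.pos = x.2) →
      b.circle = a.circle ∧ (b.pos = x.2 + 1 ∨ b.pos = x.2) := fun x h1 h2 => by
    have hb := some_mem_toSym2.mp (h ▸ some_mem_toSym2.mpr ⟨h1, h2⟩)
    exact ⟨hb.1.symm.trans h1, hb.2⟩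
  have hka := hk a.circle
  have ha := a.pos_le
  have hb := b.pos_le
  unfold IsHub at hhub
  rcases Nat.lt_or_ge a.pos (k a.circle) with hlt | hge
  · obtain ⟨hp, h1⟩ := hsome ⟨a.circle, a.pos, hlt⟩ rfl (Or.inr rfl)
    refine BouquetEdge.ext hp.symm ?_
    rw [hp] at hb hhub
    rcases Nat.eq_zero_or_pos a.pos with h0 | h0
    · simp only at h1
      omega
    · obtain ⟨-, h2⟩ := hsome ⟨a.circle, a.pos - 1, by omega⟩ rfl (Or.inl (by simp; omega))
      simp only at h1 h2
      omega
  · obtain ⟨hp, h1⟩ := hsome ⟨a.circle, a.pos - 1, by omega⟩ rfl (Or.inl (by simp; omega))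
    refine BouquetEdge.ext hp.symm ?_
    rw [hp] at hb hhub
    simp only at h1
    omega

lemma exists_mem_toSym2_iff {a b : BouquetEdge n k} :
    (∃ v, v ∈ a.toSym2 ∧ v ∈ b.toSym2) ↔ a = b ∨ (bouquetLineGraph n k).Adj a b := by
  constructor
  · rintro ⟨_ | x, hva, hvb⟩
    · by_cases hab : a = b
      · exact Or.inl hab
      · exact Or.inr ⟨hab, Or.inr ⟨none_mem_toSym2.mp hva, none_mem_toSym2.mp hvb⟩⟩
    · obtain ⟨hpa, ha⟩ := some_mem_toSym2.mp hva
      obtain ⟨hpb, hb⟩ := some_mem_toSym2.mp hvb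
      by_cases hab : a = b
      · exact Or.inl hab
      · have hpos : a.pos ≠ b.pos := fun h => hab (BouquetEdge.ext (hpa.symm.trans hpb) h)
        exact Or.inr ⟨hab, Or.inl ⟨hpa.symm.trans hpb, by omega⟩⟩
  · rintro (rfl | ⟨-, ⟨hp, hc | hc⟩ | ⟨ha, hb⟩⟩)
    · exact ⟨_, Sym2.mem_mk_left _ _, Sym2.mem_mk_left _ _⟩
    · refine ⟨circleVertex k a.circle (a.pos + 1), Sym2.mem_mk_right _ _, ?_⟩
      rw [hp, hc]
      exact Sym2.mem_mk_left _ _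
    · refine ⟨circleVertex k a.circle a.pos, Sym2.mem_mk_left _ _, ?_⟩
      rw [hp, ← hc]
      exact Sym2.mem_mk_right _ _
    · exact ⟨none, none_mem_toSym2.mpr ha, none_mem_toSym2.mpr hb⟩

noncomputable def bouquetLineGraphIso (hk : ∀ i, 2 ≤ k i) :
    bouquetLineGraph n k ≃g (bouquet n k).lineGraph where
  toEquiv := Equiv.ofBijective
    (fun a => ⟨a.toSym2, toSym2_mem_edgeSet (by have := hk a.circle; omega)⟩)
    ⟨fun _ _ h => toSym2_injective hk (congrArg Subtype.val h),
      fun e => (exists_toSym2_eq e.2).imp fun _ ha => Subtype.ext ha⟩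
  map_rel_iff' {a b} := by
    change (bouquet n k).lineGraph.Adj ⟨a.toSym2, _⟩ ⟨b.toSym2, _⟩ ↔ _
    rw [SimpleGraph.lineGraph_adj_iff_exists]
    simp only [ne_eq, Subtype.mk.injEq, (toSym2_injective hk).eq_iff, exists_mem_toSym2_iff]
    exact ⟨fun h => h.2.resolve_left h.1, fun h => ⟨h.ne, Or.inr h⟩⟩

def circleEdges (k : Fin n → ℕ) (i : Fin n) : Set (BouquetEdge n k) := {a | a.circle = i}

lemma adj_of_isHub {a b : BouquetEdge n k} (ha : a.IsHub) (hb : b.IsHub) (hab : a ≠ b) :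
    (bouquetLineGraph n k).Adj a b :=
  ⟨hab, Or.inr ⟨ha, hb⟩⟩

lemma isHub_of_adj_of_circle_ne {a b : BouquetEdge n k} (h : (bouquetLineGraph n k).Adj a b)
    (hp : a.circle ≠ b.circle) : a.IsHub ∧ b.IsHub :=
  h.2.resolve_left fun h' => hp h'.1

lemma exists_isHub_ne {i : Fin n} (hk : 0 < k i) (x : BouquetEdge n k) :
    ∃ w : BouquetEdge n k, w.circle = i ∧ w.IsHub ∧ w ≠ x := by
  by_cases hx : x = ⟨i, 0, Nat.zero_le _⟩
  · exact ⟨⟨i, k i, le_rfl⟩, rfl, Or.inr rfl, by simp [hx, BouquetEdge.ext_iff]; omega⟩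
  · exact ⟨⟨i, 0, Nat.zero_le _⟩, rfl, Or.inl rfl, Ne.symm hx⟩

/-- As the circle has length at least `3`, the two neighbours of `a` on it are distinct. -/
lemma exists_adj_ne (a v : BouquetEdge n k) (hk : 2 ≤ k a.circle) :
    ∃ w : BouquetEdge n k, w.circle = a.circle ∧ w ≠ v ∧ (bouquetLineGraph n k).Adj a w := by
  suffices ∃ w₁ w₂ : BouquetEdge n k, w₁.circle = a.circle ∧ w₂.circle = a.circle ∧ w₁ ≠ w₂ ∧
      (bouquetLineGraph n k).Adj a w₁ ∧ (bouquetLineGraph n k).Adj a w₂ by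
    obtain ⟨w₁, w₂, h₁, h₂, hne, ha₁, ha₂⟩ := this
    by_cases hv : w₁ = v
    · exact ⟨w₂, h₂, fun h => hne (hv.trans h.symm), ha₂⟩
    · exact ⟨w₁, h₁, hv, ha₁⟩
  obtain ⟨i, j, hj⟩ := a
  simp only at hk ⊢
  rcases Nat.eq_zero_or_pos j with rfl | h0
  · refine ⟨⟨i, 1, by omega⟩, ⟨i, k i, le_rfl⟩, rfl, rfl, ?_, ?_, ?_⟩ <;>
      simp [bouquetLineGraph, BouquetEdge.ext_iff, IsHub] <;> omega
  rcases Nat.lt_or_ge j (k i) with hlt | hge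
  · refine ⟨⟨i, j - 1, by omega⟩, ⟨i, j + 1, hlt⟩, rfl, rfl, ?_, ?_, ?_⟩ <;>
      simp [bouquetLineGraph, BouquetEdge.ext_iff, IsHub]
    omega
  · refine ⟨⟨i, j - 1, by omega⟩, ⟨i, 0, Nat.zero_le _⟩, rfl, rfl, ?_, ?_, ?_⟩ <;>
      simp [bouquetLineGraph, BouquetEdge.ext_iff, IsHub] <;> omega

lemma isFort_circleEdges {i : Fin n} (hk : 0 < k i) :
    IsFort (bouquetLineGraph n k) (circleEdges k i) := by
  rintro v (hv : v.circle = i) u (hu : u.circle ≠ i) huv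
  obtain ⟨hu', -⟩ := isHub_of_adj_of_circle_ne huv (hv ▸ hu)
  obtain ⟨w, hw, hwhub, hwv⟩ := exists_isHub_ne hk v
  exact ⟨w, hw, hwv, adj_of_isHub hu' hwhub fun h => hu (h ▸ hw)⟩

lemma isFort_circleEdges_union_sdiff (hk : ∀ i, 2 ≤ k i) {i j : Fin n} (hij : i ≠ j)
    {x y : BouquetEdge n k} (hx : x.circle = i) (hy : y.circle = j) :
    IsFort (bouquetLineGraph n k) ((circleEdges k i ∪ circleEdges k j) \ {x, y}) := by
  have hmem : ∀ w, w ∈ (circleEdges k i ∪ circleEdges k j) \ {x, y} ↔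
      (w.circle = i ∧ w ≠ x) ∨ (w.circle = j ∧ w ≠ y) := by
    intro w
    simp only [circleEdges, Set.mem_sdiff, Set.mem_union, Set.mem_ofPred_eq, Set.mem_insert_iff,
      Set.mem_singleton_iff]
    constructor
    · rintro ⟨h | h, hw⟩
      · exact Or.inl ⟨h, fun h' => hw (Or.inl h')⟩
      · exact Or.inr ⟨h, fun h' => hw (Or.inr h')⟩
    · rintro (⟨h, hw⟩ | ⟨h, hw⟩)
      · exact ⟨Or.inl h, by rintro (rfl | rfl) <;> [exact hw rfl; exact hij (h.symm.trans hy)]⟩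
      · exact ⟨Or.inr h, by rintro (rfl | rfl) <;> [exact hij (hx.symm.trans h); exact hw rfl]⟩
  intro v hv u hu huv
  rw [hmem] at hv hu
  by_cases hux : u = x
  · subst hux
    obtain ⟨w, hw, hwv, huw⟩ := exists_adj_ne u v (hk _)
    exact ⟨w, (hmem w).mpr (Or.inl ⟨hw.trans hx, huw.ne.symm⟩), hwv, huw⟩
  by_cases huy : u = y
  · subst huy
    obtain ⟨w, hw, hwv, huw⟩ := exists_adj_ne u v (hk _)
    exact ⟨w, (hmem w).mpr (Or.inr ⟨hw.trans hy, huw.ne.symm⟩), hwv, huw⟩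
  have hui : u.circle ≠ i := fun h => hu (Or.inl ⟨h, hux⟩)
  have huj : u.circle ≠ j := fun h => hu (Or.inr ⟨h, huy⟩)
  have hvp : u.circle ≠ v.circle := by rcases hv with ⟨h, -⟩ | ⟨h, -⟩ <;> rw [h] <;> assumption
  obtain ⟨huhub, -⟩ := isHub_of_adj_of_circle_ne huv hvp
  obtain ⟨c, hc, hchub, hcx⟩ := exists_isHub_ne (i := i) (by have := hk i; omega) x
  obtain ⟨c', hc', hchub', hcy⟩ := exists_isHub_ne (i := j) (by have := hk j; omega) y
  by_cases hcv : c = v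
  · refine ⟨c', (hmem c').mpr (Or.inr ⟨hc', hcy⟩), ?_, adj_of_isHub huhub hchub' ?_⟩
    · rintro rfl
      exact hij (hc.symm.trans ((congrArg BouquetEdge.circle hcv).trans hc'))
    · rintro rfl
      exact huj hc'
  · refine ⟨c, (hmem c).mpr (Or.inl ⟨hc, hcx⟩), hcv, adj_of_isHub huhub hchub ?_⟩
    rintro rfl
    exact hui hc

lemma IsZeroForcingSet.two_mul_le_ncard_add_one_of_bouquetLineGraph (hk : ∀ i, 2 ≤ k i)
    {S : Set (BouquetEdge n k)} (hS : IsZeroForcingSet (bouquetLineGraph n k) S) :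
    2 * n ≤ S.ncard + 1 := by
  have hk₀ : ∀ i, 0 < k i := fun i => by have := hk i; omega
  simpa using hS.two_mul_card_le_ncard_add_one (P := circleEdges k)
    (fun i j hij => Set.disjoint_left.mpr fun a (hi : a.circle = i) (hj : a.circle = j) =>
      hij (hi.symm.trans hj))
    (fun i => ⟨⟨i, 0, Nat.zero_le _⟩, rfl, ⟨i, k i, le_rfl⟩, rfl,
      by simp [BouquetEdge.ext_iff]; exact (hk₀ i).ne⟩)
    (fun i => isFort_circleEdges (hk₀ i))
    (fun i j hij x hx y hy => isFort_circleEdges_union_sdiff hk hij hx hy)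

/-- Interior edges of a circle have both neighbours on the circle, so two consecutive black
edges at its start force the whole circle. -/
lemma circleEdges_subset_zfClosure {S : Set (BouquetEdge n k)} {i : Fin n}
    (h : ∀ a : BouquetEdge n k, a.circle = i → a.pos ≤ 1 → a ∈ zfClosure (bouquetLineGraph n k) S) :
    circleEdges k i ⊆ zfClosure (bouquetLineGraph n k) S := by
  suffices ∀ j, ∀ a : BouquetEdge n k, a.circle = i → a.pos ≤ j + 1 →
      a ∈ zfClosure (bouquetLineGraph n k) S from
    fun a (ha : a.circle = i) => this a.pos a ha (Nat.le_succ _)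
  intro j
  induction j with
  | zero => exact h
  | succ j ih =>
    intro a ha hpos
    rcases Nat.lt_or_ge a.pos (j + 2) with hlt | hge
    · exact ih a ha (by omega)
    have hak := a.pos_le
    rw [ha] at hak
    let u : BouquetEdge n k := ⟨i, j + 1, by omega⟩
    refine mem_zfClosure_of_forces (u := u) (ih u rfl le_rfl)
      ⟨by simp [u, BouquetEdge.ext_iff]; omega, Or.inl ⟨ha.symm, Or.inl (by simp [u]; omega)⟩⟩
      fun w huw hwa => ?_
    rcases huw.2 with ⟨hp, hc | hc⟩ | ⟨hu, -⟩
    · exact absurd (BouquetEdge.ext (hp.symm.trans ha.symm) (by simp [u] at hc; omega)) hwa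
    · exact ih w hp.symm (by simp [u] at hc; omega)
    · simp only [IsHub, u] at hu
      omega

def forcingSet (hk : ∀ i, 0 < k i) (i₀ : Fin n) : Set (BouquetEdge n k) :=
  Set.range (fun i => ⟨i, 0, Nat.zero_le _⟩) ∪ (fun i => ⟨i, 1, hk i⟩) '' {i₀}ᶜ

lemma ncard_forcingSet (hk : ∀ i, 0 < k i) (i₀ : Fin n) :
    (forcingSet hk i₀).ncard = 2 * n - 1 := by
  have hn := i₀.pos
  rw [forcingSet, Set.ncard_union_eq, Set.ncard_range_of_injective, Set.ncard_image_of_injective,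
    Set.ncard_compl, Set.ncard_singleton, Nat.card_fin]
  · omega
  · exact fun i j h => congrArg BouquetEdge.circle h
  · exact fun i j h => congrArg BouquetEdge.circle h
  · rw [Set.disjoint_left]
    rintro _ ⟨i, rfl⟩ ⟨j, -, h⟩
    exact absurd (congrArg BouquetEdge.pos h) one_ne_zero

lemma mem_zfClosure_forcingSet_of_pos_eq_zero (hk : ∀ i, 0 < k i) {i₀ : Fin n}
    {a : BouquetEdge n k} (ha : a.pos = 0) :
    a ∈ zfClosure (bouquetLineGraph n k) (forcingSet hk i₀) :=
  subset_zfClosure (Or.inl ⟨a.circle, BouquetEdge.ext rfl ha.symm⟩)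

lemma mem_zfClosure_forcingSet_of_circle_ne (hk : ∀ i, 0 < k i) {i₀ : Fin n}
    {a : BouquetEdge n k} (ha : a.circle ≠ i₀) :
    a ∈ zfClosure (bouquetLineGraph n k) (forcingSet hk i₀) := by
  refine circleEdges_subset_zfClosure (i := a.circle) (fun b hb hb1 => ?_) rfl
  rcases Nat.le_one_iff_eq_zero_or_eq_one.mp hb1 with h0 | h1
  · exact mem_zfClosure_forcingSet_of_pos_eq_zero hk h0
  · exact subset_zfClosure (Or.inr ⟨b.circle, hb ▸ ha, BouquetEdge.ext rfl h1.symm⟩)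

/-- Once the circles other than `i₀` are black, the last edge of circle `i₁` forces the last
edge of circle `i₀`, after which the first edge of circle `i₀` forces its second one. -/
lemma isZeroForcingSet_forcingSet (hk : ∀ i, 0 < k i) {i₀ i₁ : Fin n} (h₁₀ : i₁ ≠ i₀) :
    IsZeroForcingSet (bouquetLineGraph n k) (forcingSet hk i₀) := by
  set D := zfClosure (bouquetLineGraph n k) (forcingSet hk i₀)
  have hzero : ∀ {a : BouquetEdge n k}, a.pos = 0 → a ∈ D :=
    mem_zfClosure_forcingSet_of_pos_eq_zero hk
  have hout : ∀ {a : BouquetEdge n k}, a.circle ≠ i₀ → a ∈ D :=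
    mem_zfClosure_forcingSet_of_circle_ne hk
  have hlast : (⟨i₀, k i₀, le_rfl⟩ : BouquetEdge n k) ∈ D := by
    refine mem_zfClosure_of_forces (hout (a := ⟨i₁, k i₁, le_rfl⟩) h₁₀)
      (adj_of_isHub (Or.inr rfl) (Or.inr rfl) fun h => h₁₀ (congrArg BouquetEdge.circle h))
      fun w huw hw => ?_
    by_cases hwp : w.circle = i₀
    · rcases (isHub_of_adj_of_circle_ne huw (hwp ▸ h₁₀)).2 with h0 | hk'
      · exact hzero h0
      · exact absurd (BouquetEdge.ext hwp (hwp ▸ hk')) hw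
    · exact hout hwp
  have hsecond : (⟨i₀, 1, hk i₀⟩ : BouquetEdge n k) ∈ D := by
    refine mem_zfClosure_of_forces (hzero (a := ⟨i₀, 0, Nat.zero_le _⟩) rfl)
      ⟨by simp [BouquetEdge.ext_iff], Or.inl ⟨rfl, Or.inl rfl⟩⟩ fun w huw hw => ?_
    by_cases hwp : w.circle = i₀
    · rcases huw.2 with ⟨-, hc | hc⟩ | ⟨-, h0 | hk'⟩
      · exact absurd (BouquetEdge.ext hwp hc.symm) hw
      · simp at hc
      · exact hzero h0
      · rwa [show w = ⟨i₀, k i₀, le_rfl⟩ from BouquetEdge.ext hwp (by rw [hk', hwp])]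
    · exact hout hwp
  have hin : circleEdges k i₀ ⊆ D := circleEdges_subset_zfClosure fun b hb hb1 => by
    rcases Nat.le_one_iff_eq_zero_or_eq_one.mp hb1 with h0 | h1
    · exact hzero h0
    · rwa [show b = ⟨i₀, 1, hk i₀⟩ from BouquetEdge.ext hb h1]
  refine isZeroForcingSet_of_zfClosure_eq_univ (Set.eq_univ_of_forall fun a => ?_)
  by_cases ha : a.circle = i₀
  · exact hin ha
  · exact hout ha

end Bouquet

theorem zeroForcingNum_lineGraph_bouquet_general (n : ℕ) (hn : 2 ≤ n) (k : Fin n → ℕ)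
    (hk : ∀ i, 2 ≤ k i) :
    zeroForcingNum (bouquet n k).lineGraph = 2 * n - 1 := by
  have hk₀ : ∀ i, 0 < k i := fun i => by have := hk i; omega
  rw [← zeroForcingNum_congr (bouquetLineGraphIso hk)]
  refine zeroForcingNum_eq_of_forall_le
    (isZeroForcingSet_forcingSet hk₀ (i₀ := ⟨0, by omega⟩) (i₁ := ⟨1, by omega⟩) (by simp))
    (ncard_forcingSet hk₀ _) fun S hS => ?_
  have := hS.two_mul_le_ncard_add_one_of_bouquetLineGraph hk
  omega

/-- For a bouquet `B_n` of `n ≥ 2` circles of lengths `k i + 1` with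
`k n ≥ … ≥ k 1 ≥ 2`, the zero forcing number of its line graph is `2n - 1`. -/
theorem zeroForcingNum_lineGraph_bouquet (n : ℕ) (hn : 2 ≤ n) (k : Fin n → ℕ)
    (hk : ∀ i, 2 ≤ k i) (hmono : Monotone k) :
    zeroForcingNum (bouquet n k).lineGraph = 2 * n - 1 :=
  zeroForcingNum_lineGraph_bouquet_general n hn k hk
end

section
/- Let G be a connected graph of order n that contains a Hamiltonian path. If 5 ≤ n ≤ 8 and the average degree of G is at least 3, then dim(L(G)) ≤ Z(L(G)); if n ≥ 9 and the average degree of G is at least 4, then dim(L(G)) ≤ Z(L(G)). -/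
open SimpleGraph

variable {V : Type*}

/-!
Let `v₀ v₁ ⋯ v_{n-1}` be the Hamiltonian path. An edge `vᵢvⱼ` outside the first
`m = max 4 (n - 2)` path edges `vₖvₖ₊₁` is determined by which of them it meets, so these `m`
edges resolve `L(G)`. In a zero forcing process on `L(G)`, an edge `e` is forced across an
endpoint `b` all of whose other edges are already black, so `e ↦ b` is injective on forced edges.
Its image misses the far endpoint of the last forced edge, and the endpoint of the edge forcing
the first forced edge `e₀` that lies off `e₀`; hence at most `n - 2` edges are forced and
`Z(L(G)) ≥ |E(G)| - (n - 2)`. The degree bounds give `|E(G)| - (n - 2) ≥ max 4 (n - 2)`.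
-/

/-- `{i, j}` meets the `k`-th edge `{k, k + 1}` of the path `0, 1, 2, …`. -/
def Touches (i j k : ℕ) : Prop := i = k ∨ i = k + 1 ∨ j = k ∨ j = k + 1

section Touches

variable {m i j i' j' : ℕ}

lemma fst_le_of_touches_iff (hm : 4 ≤ m) (hij : i < j) (hj : j ≤ m + 1) (hij' : i' < j')
    (hj' : j' ≤ m + 1) (hpath : j = i + 1 → m ≤ i) (hpath' : j' = i' + 1 → m ≤ i')
    (H : ∀ k < m, Touches i j k ↔ Touches i' j' k) : i' ≤ i := by
  unfold Touches at H
  by_contra! h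
  have h1 : i < m → i' = i ∨ i' = i + 1 ∨ j' = i ∨ j' = i + 1 := fun hi =>
    (H i hi).mp (Or.inl rfl)
  have h2 : 1 ≤ i → i' = i - 1 ∨ i' = i - 1 + 1 ∨ j' = i - 1 ∨ j' = i - 1 + 1 := fun hi =>
    (H (i - 1) (by omega)).mp (Or.inr (Or.inl (by omega)))
  have h3 := H 1 (by omega)
  have h4 : j' ≤ m → i = j' - 1 ∨ i = j' - 1 + 1 ∨ j = j' - 1 ∨ j = j' - 1 + 1 := fun hj =>
    (H (j' - 1) (by omega)).mpr (Or.inr (Or.inr (Or.inr (by omega))))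
  have h5 : j < m → i' = j ∨ i' = j + 1 ∨ j' = j ∨ j' = j + 1 := fun hj =>
    (H j hj).mp (Or.inr (Or.inr (Or.inl rfl)))
  have h6 : j' < m → i = j' ∨ i = j' + 1 ∨ j = j' ∨ j = j' + 1 := fun hj =>
    (H j' hj).mpr (Or.inr (Or.inr (Or.inl rfl)))
  omega

lemma snd_eq_of_touches_iff (hij : i < j) (hj : j ≤ m + 1) (hij' : i < j') (hj' : j' ≤ m + 1)
    (hpath : j = i + 1 → m ≤ i) (hpath' : j' = i + 1 → m ≤ i)
    (H : ∀ k < m, Touches i j k ↔ Touches i j' k) : j = j' := by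
  unfold Touches at H
  have h1 : j ≤ m → i = j - 1 ∨ i = j - 1 + 1 ∨ j' = j - 1 ∨ j' = j - 1 + 1 := fun hj =>
    (H (j - 1) (by omega)).mp (Or.inr (Or.inr (Or.inr (by omega))))
  have h2 : j' ≤ m → i = j' - 1 ∨ i = j' - 1 + 1 ∨ j = j' - 1 ∨ j = j' - 1 + 1 := fun hj =>
    (H (j' - 1) (by omega)).mpr (Or.inr (Or.inr (Or.inr (by omega))))
  omega

lemma eq_of_touches_iff (hm : 4 ≤ m) (hij : i < j) (hj : j ≤ m + 1) (hij' : i' < j')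
    (hj' : j' ≤ m + 1) (hpath : j = i + 1 → m ≤ i) (hpath' : j' = i' + 1 → m ≤ i')
    (H : ∀ k < m, Touches i j k ↔ Touches i' j' k) : i = i' ∧ j = j' := by
  obtain rfl : i = i' := le_antisymm
    (fst_le_of_touches_iff hm hij' hj' hij hj hpath' hpath fun k hk => (H k hk).symm)
    (fst_le_of_touches_iff hm hij hj hij' hj' hpath hpath' H)
  exact ⟨rfl, snd_eq_of_touches_iff hij hj hij' hj' hpath hpath' H⟩

end Touches

section Resolving

variable {α : Type*} {H : SimpleGraph α}

lemma isResolvingSet_of_adj_separating (hH : H.Preconnected) {W : Set α}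
    (h : ∀ x y, x ∉ W → y ∉ W → x ≠ y → ∃ w ∈ W, ¬(H.Adj x w ↔ H.Adj y w)) :
    IsResolvingSet H W := by
  intro x y hxy
  by_cases hx : x ∈ W
  · refine ⟨x, hx, ?_⟩
    rw [SimpleGraph.dist_self, ne_comm, Ne, (hH y x).dist_eq_zero_iff]
    exact hxy.symm
  by_cases hy : y ∈ W
  · refine ⟨y, hy, ?_⟩
    rw [SimpleGraph.dist_self, Ne, (hH x y).dist_eq_zero_iff]
    exact hxy
  obtain ⟨w, hw, hxyw⟩ := h x y hx hy hxy
  refine ⟨w, hw, fun hd => hxyw ?_⟩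
  rw [← SimpleGraph.dist_eq_one_iff_adj, ← SimpleGraph.dist_eq_one_iff_adj, hd]

end Resolving

section ZeroForcing

variable {α : Type*} {H : SimpleGraph α} {S : Set α}

-- junk value `0` if `x` never turns black
noncomputable def forcingTime (H : SimpleGraph α) (S : Set α) (x : α) : ℕ :=
  sInf {k | x ∈ (zfStep H)^[k] S}

lemma IsZeroForcingSet.mem_iterate_forcingTime (hS : IsZeroForcingSet H S) (x : α) :
    x ∈ (zfStep H)^[forcingTime H S x] S := by
  obtain ⟨m, hm⟩ := hS
  exact Nat.sInf_mem (s := {k | x ∈ (zfStep H)^[k] S}) ⟨m, show x ∈ _ from hm ▸ Set.mem_univ x⟩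

lemma forcingTime_le {x : α} {k : ℕ} (h : x ∈ (zfStep H)^[k] S) : forcingTime H S x ≤ k :=
  Nat.sInf_le h

lemma IsZeroForcingSet.exists_forcer (hS : IsZeroForcingSet H S) {x : α} (hx : x ∉ S) :
    ∃ u, H.Adj u x ∧ forcingTime H S u < forcingTime H S x ∧
      ∀ w, H.Adj u w → w ≠ x → forcingTime H S w < forcingTime H S x := by
  have hmem := hS.mem_iterate_forcingTime x
  obtain ⟨k, hk⟩ : ∃ k, forcingTime H S x = k + 1 :=
    Nat.exists_eq_add_one.mpr (Nat.pos_of_ne_zero fun h0 => hx (by rwa [h0] at hmem))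
  have hxk : x ∉ (zfStep H)^[k] S :=
    Nat.notMem_of_lt_sInf (s := {k | x ∈ (zfStep H)^[k] S}) (show k < forcingTime H S x by omega)
  rw [hk, Function.iterate_succ_apply'] at hmem
  obtain ⟨u, hu, hux, hforce⟩ := hmem.resolve_left hxk
  refine ⟨u, hux, (forcingTime_le hu).trans_lt (by omega), fun w huw hwx => ?_⟩
  refine (forcingTime_le (k := k) ?_).trans_lt (by omega)
  by_contra hw
  exact hwx (hforce w huw hw)

end ZeroForcing

namespace SimpleGraph

variable {G : SimpleGraph V}

lemma lineGraph_reachable_of_mem {e f : G.edgeSet} {x : V} (he : x ∈ (e : Sym2 V))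
    (hf : x ∈ (f : Sym2 V)) : G.lineGraph.Reachable e f := by
  rcases eq_or_ne e f with rfl | hne
  · rfl
  · exact (lineGraph_adj_iff_exists.mpr ⟨hne, x, he, hf⟩).reachable

lemma Walk.lineGraph_reachable {x y : V} (w : G.Walk x y) {e f : G.edgeSet}
    (he : x ∈ (e : Sym2 V)) (hf : y ∈ (f : Sym2 V)) : G.lineGraph.Reachable e f := by
  induction w generalizing e with
  | nil => exact lineGraph_reachable_of_mem he hf
  | @cons a b _ hadj _ ih =>
    exact (lineGraph_reachable_of_mem (f := ⟨s(a, b), hadj⟩) he (Sym2.mem_mk_left a b)).trans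
      (ih (e := ⟨s(a, b), hadj⟩) (Sym2.mem_mk_right a b) hf)

lemma Preconnected.lineGraph (h : G.Preconnected) : G.lineGraph.Preconnected := fun _ _ =>
  (h _ _).elim fun w => w.lineGraph_reachable (Sym2.out_fst_mem _) (Sym2.out_fst_mem _)

end SimpleGraph

section LineGraphZeroForcing

variable {G : SimpleGraph V}

lemma IsZeroForcingSet.exists_lineGraph_forcing_vertices {S : Set G.edgeSet}
    (hS : IsZeroForcingSet G.lineGraph S) {e : G.edgeSet} (he : e ∉ S) :
    ∃ b ∈ (e : Sym2 V), ∃ a : V,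
      (∀ g : G.edgeSet, b ∈ (g : Sym2 V) → g ≠ e →
        forcingTime G.lineGraph S g < forcingTime G.lineGraph S e) ∧
      ∀ g : G.edgeSet, a ∈ (g : Sym2 V) →
        forcingTime G.lineGraph S g < forcingTime G.lineGraph S e := by
  obtain ⟨u, hue, hu, hnbr⟩ := hS.exists_forcer he
  have hearly : ∀ g : G.edgeSet, ∀ x ∈ (u : Sym2 V), x ∈ (g : Sym2 V) → g ≠ e →
      forcingTime G.lineGraph S g < forcingTime G.lineGraph S e := fun g x hxu hxg hge => by
    rcases eq_or_ne u g with rfl | hug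
    · exact hu
    · exact hnbr g (SimpleGraph.lineGraph_adj_iff_exists.mpr ⟨hug, x, hxu, hxg⟩) hge
  obtain ⟨hne, b, hbu, hbe⟩ := SimpleGraph.lineGraph_adj_iff_exists.mp hue
  have hba : b ≠ Sym2.Mem.other hbu :=
    (Sym2.other_ne (G.not_isDiag_of_mem_edgeSet u.2) hbu).symm
  refine ⟨b, hbe, Sym2.Mem.other hbu, fun g hbg hge => hearly g b hbu hbg hge,
    fun g hag => hearly g _ (Sym2.other_mem hbu) hag ?_⟩
  -- an edge containing both endpoints of `u` is `u` itself
  rintro rfl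
  exact hne (Subtype.ext ((Sym2.other_spec hbu).symm.trans
    ((Sym2.mem_and_mem_iff hba).mp ⟨hbe, hag⟩).symm))

lemma ncard_le_card_sub_two_of_forcing_vertices [Fintype V] {F : Set G.edgeSet}
    (t : G.edgeSet → ℕ)
    (h : ∀ e ∈ F, ∃ b ∈ (e : Sym2 V), ∃ a : V,
      (∀ g ∈ F, b ∈ (g : Sym2 V) → g ≠ e → t g < t e) ∧ ∀ g ∈ F, a ∈ (g : Sym2 V) → t g < t e) :
    F.ncard ≤ Fintype.card V - 2 := by
  rcases F.eq_empty_or_nonempty with rfl | hF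
  · simp
  have : Nonempty V := ⟨(hF.some : Sym2 V).out.1⟩
  choose! b hb a hbt hat using h
  obtain ⟨eM, heM, hmax⟩ := Set.exists_max_image F t F.toFinite hF
  obtain ⟨e₀, he₀, hmin⟩ := Set.exists_min_image F t F.toFinite hF
  set c := Sym2.Mem.other (hb eM heM)
  have hc : c ∈ (eM : Sym2 V) := Sym2.other_mem _
  have hcb : c ≠ b eM := Sym2.other_ne (G.not_isDiag_of_mem_edgeSet eM.2) _
  have hca : c ≠ a e₀ := fun h => (hat e₀ he₀ eM heM (h ▸ hc)).not_ge (hmin eM heM)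
  have hinj : Set.InjOn b F := fun e he g hg hbg => by
    by_contra hne
    exact (hbt e he g hg (hbg ▸ hb g hg) (Ne.symm hne)).not_gt
      (hbt g hg e he (hbg ▸ hb e he) hne)
  have hmaps : ∀ e ∈ F, b e ∈ ({c, a e₀}ᶜ : Set V) := by
    intro e he
    simp only [Set.mem_compl_iff, Set.mem_insert_iff, Set.mem_singleton_iff, not_or]
    refine ⟨fun hbc => ?_, fun hba => (hat e₀ he₀ e he (hba ▸ hb e he)).not_ge (hmin e he)⟩
    rcases eq_or_ne eM e with rfl | hne
    · exact hcb hbc.symm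
    · exact (hbt e he eM heM (hbc ▸ hc) hne).not_ge (hmax e he)
  calc F.ncard ≤ ({c, a e₀}ᶜ : Set V).ncard := Set.ncard_le_ncard_of_injOn b hmaps hinj
    _ = Fintype.card V - 2 := by rw [Set.ncard_compl, Set.ncard_pair hca, Nat.card_eq_fintype_card]

lemma IsZeroForcingSet.edgeSet_ncard_le [Fintype V] {S : Set G.edgeSet}
    (hS : IsZeroForcingSet G.lineGraph S) : G.edgeSet.ncard ≤ Fintype.card V - 2 + S.ncard := by
  have hforced : Sᶜ.ncard ≤ Fintype.card V - 2 :=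
    ncard_le_card_sub_two_of_forcing_vertices (forcingTime G.lineGraph S) fun e he => by
      obtain ⟨b, hb, a, hbt, hat⟩ := hS.exists_lineGraph_forcing_vertices he
      exact ⟨b, hb, a, fun g _ => hbt g, fun g _ => hat g⟩
  have hsplit := Set.ncard_add_ncard_compl S
  rw [Nat.card_coe_set_eq] at hsplit
  omega

lemma edgeSet_ncard_le_zeroForcingNum_lineGraph [Fintype V] :
    G.edgeSet.ncard ≤ Fintype.card V - 2 + zeroForcingNum G.lineGraph := by
  obtain ⟨S, hS, hzf⟩ : zeroForcingNum G.lineGraph ∈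
      {k | ∃ S : Set G.edgeSet, S.ncard = k ∧ IsZeroForcingSet G.lineGraph S} :=
    Nat.sInf_mem ⟨_, Set.univ, rfl, 0, rfl⟩
  exact hS ▸ hzf.edgeSet_ncard_le

end LineGraphZeroForcing

namespace SimpleGraph.Walk

variable {G : SimpleGraph V} {u v : V}

def initialEdges (p : G.Walk u v) (m : ℕ) : Set G.edgeSet :=
  {e | ∃ k < m, (e : Sym2 V) = s(p.getVert k, p.getVert (k + 1))}

lemma ncard_initialEdges_le (p : G.Walk u v) (m : ℕ) : (p.initialEdges m).ncard ≤ m := by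
  classical
  calc (p.initialEdges m).ncard
      ≤ (((Finset.range m).image fun k => s(p.getVert k, p.getVert (k + 1)) :
          Finset (Sym2 V)) : Set (Sym2 V)).ncard :=
        Set.ncard_le_ncard_of_injOn Subtype.val
          (fun _ ⟨k, hk, he⟩ => by simpa [he] using ⟨k, hk, Or.inl ⟨rfl, rfl⟩⟩)
          Subtype.val_injective.injOn
    _ ≤ m := by
        rw [Set.ncard_coe_finset]
        exact Finset.card_image_le.trans (Finset.card_range m).le

variable [DecidableEq V] {p : G.Walk u v}

lemma IsHamiltonian.preconnected (hp : p.IsHamiltonian) : G.Preconnected := fun x y =>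
  Reachable.trans (Reachable.symm ⟨p.takeUntil x (hp.mem_support x)⟩)
    ⟨p.takeUntil y (hp.mem_support y)⟩

variable [Fintype V]

lemma IsHamiltonian.exists_getVert_eq (hp : p.IsHamiltonian) (x : V) :
    ∃ i < Fintype.card V, p.getVert i = x := by
  obtain ⟨i, rfl⟩ := hp.getVertEquiv.surjective x
  exact ⟨i, hp.length_support ▸ i.2, rfl⟩

lemma IsHamiltonian.getVert_inj (hp : p.IsHamiltonian) {i j : ℕ} (hi : i < Fintype.card V)
    (hj : j < Fintype.card V) : p.getVert i = p.getVert j ↔ i = j :=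
  ⟨fun h => hp.isPath.getVert_injOn (by simp [hp.length_eq]; omega)
    (by simp [hp.length_eq]; omega) h, congrArg _⟩

lemma IsHamiltonian.exists_eq_getVert_of_mem_edgeSet (hp : p.IsHamiltonian) {e : Sym2 V}
    (he : e ∈ G.edgeSet) :
    ∃ i j, i < j ∧ j < Fintype.card V ∧ e = s(p.getVert i, p.getVert j) := by
  induction e using Sym2.ind with
  | h x y =>
    obtain ⟨i, hi, rfl⟩ := hp.exists_getVert_eq x
    obtain ⟨j, hj, rfl⟩ := hp.exists_getVert_eq y
    rcases lt_trichotomy i j with h | rfl | h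
    · exact ⟨i, j, h, hj, rfl⟩
    · exact absurd rfl (G.mem_edgeSet.mp he).ne
    · exact ⟨j, i, h, hi, Sym2.eq_swap⟩

lemma IsHamiltonian.lineGraph_adj_iff_touches (hp : p.IsHamiltonian) {e f : G.edgeSet}
    (hef : e ≠ f) {i j k : ℕ} (hi : i < Fintype.card V) (hj : j < Fintype.card V)
    (hk : k + 1 < Fintype.card V) (he : (e : Sym2 V) = s(p.getVert i, p.getVert j))
    (hf : (f : Sym2 V) = s(p.getVert k, p.getVert (k + 1))) :
    G.lineGraph.Adj e f ↔ Touches i j k := by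
  rw [lineGraph_adj_iff_exists, he, hf]
  simp (disch := omega) [hef, Touches, hp.getVert_inj, or_assoc]

theorem IsHamiltonian.isResolvingSet_lineGraph_initialEdges (hp : p.IsHamiltonian) {m : ℕ}
    (hm : 4 ≤ m) (hmn : m < Fintype.card V) (hnm : Fintype.card V ≤ m + 2) :
    IsResolvingSet G.lineGraph (p.initialEdges m) := by
  refine isResolvingSet_of_adj_separating hp.preconnected.lineGraph fun e e' he he' hne => ?_
  by_contra! hsame
  obtain ⟨i, j, hij, hj, hej⟩ := hp.exists_eq_getVert_of_mem_edgeSet e.2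
  obtain ⟨i', j', hij', hj', hej'⟩ := hp.exists_eq_getVert_of_mem_edgeSet e'.2
  have hpath : ∀ {e : G.edgeSet} {a b : ℕ}, e ∉ p.initialEdges m →
      (e : Sym2 V) = s(p.getVert a, p.getVert b) → b = a + 1 → m ≤ a :=
    fun he hab hba => not_lt.mp fun ha => he ⟨_, ha, by rwa [← hba]⟩
  have htouch : ∀ k < m, Touches i j k ↔ Touches i' j' k := fun k hk => by
    have hk' : k + 1 < Fintype.card V := by omega
    let f : G.edgeSet :=
      ⟨s(p.getVert k, p.getVert (k + 1)), p.adj_getVert_succ (by rw [hp.length_eq]; omega)⟩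
    have hf : f ∈ p.initialEdges m := ⟨k, hk, rfl⟩
    rw [← hp.lineGraph_adj_iff_touches (ne_of_mem_of_not_mem hf he).symm (by omega) hj hk' hej rfl,
      ← hp.lineGraph_adj_iff_touches (ne_of_mem_of_not_mem hf he').symm (by omega) hj' hk' hej'
        rfl, hsame f hf]
  obtain ⟨rfl, rfl⟩ := eq_of_touches_iff hm hij (by omega) hij' (by omega) (hpath he hej)
    (hpath he' hej') htouch
  exact hne (Subtype.ext (hej.trans hej'.symm))

theorem IsHamiltonian.metricDim_lineGraph_le (hp : p.IsHamiltonian) (hn : 5 ≤ Fintype.card V) :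
    metricDim G.lineGraph ≤ max 4 (Fintype.card V - 2) := by
  have hres := hp.isResolvingSet_lineGraph_initialEdges (m := max 4 (Fintype.card V - 2))
    (le_max_left _ _) (by omega) (by omega)
  exact (Nat.sInf_le ⟨_, rfl, hres⟩ : metricDim G.lineGraph ≤ _).trans
    (p.ncard_initialEdges_le _)

end SimpleGraph.Walk

theorem metricDim_lineGraph_le_zeroForcingNum_lineGraph_of_avg_degree_general {V : Type*}
    [Fintype V] [DecidableEq V] (G : SimpleGraph V)
    (hham : HasHamiltonianPath G) :
    (5 ≤ Fintype.card V → Fintype.card V ≤ 8 →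
      3 * Fintype.card V ≤ 2 * G.edgeSet.ncard →
      metricDim G.lineGraph ≤ zeroForcingNum G.lineGraph) ∧
    (9 ≤ Fintype.card V →
      4 * Fintype.card V ≤ 2 * G.edgeSet.ncard →
      metricDim G.lineGraph ≤ zeroForcingNum G.lineGraph) := by
  obtain ⟨_, _, p, hp⟩ := hham
  have hZ := edgeSet_ncard_le_zeroForcingNum_lineGraph (G := G)
  refine ⟨fun h5 _ _ => ?_, fun h9 _ => ?_⟩
  · have := hp.metricDim_lineGraph_le h5
    omega
  · have := hp.metricDim_lineGraph_le (by omega)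
    omega

/-- Let `G` be a connected graph of order `n` containing a Hamiltonian path.
If `5 ≤ n ≤ 8` and the average degree of `G` is at least 3 (i.e. `2|E(G)| ≥ 3n`),
then `dim(L(G)) ≤ Z(L(G))`; if `n ≥ 9` and the average degree of `G` is at least 4
(i.e. `2|E(G)| ≥ 4n`), then `dim(L(G)) ≤ Z(L(G))`. -/
theorem metricDim_lineGraph_le_zeroForcingNum_lineGraph_of_avg_degree {V : Type*}
    [Fintype V] [DecidableEq V] (G : SimpleGraph V)
    (hconn : G.Connected) (hham : HasHamiltonianPath G) :
    (5 ≤ Fintype.card V → Fintype.card V ≤ 8 →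
      3 * Fintype.card V ≤ 2 * G.edgeSet.ncard →
      metricDim G.lineGraph ≤ zeroForcingNum G.lineGraph) ∧
    (9 ≤ Fintype.card V →
      4 * Fintype.card V ≤ 2 * G.edgeSet.ncard →
      metricDim G.lineGraph ≤ zeroForcingNum G.lineGraph) :=
  metricDim_lineGraph_le_zeroForcingNum_lineGraph_of_avg_degree_general G hham
end
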